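/- arXiv:1803.03227 — 5 statements merged into one kernel-verified Lean document; each statement's English description precedes it below -/
import Mathlib

section
/- The following three subsets of ℝ² are equal: (1) 𝒳 = {(a + b^{−1} + a^{−1}b, a^{−1} + b + ab^{−1}) : a, b ∈ ℝ, a > 0, b > 0}; (2) the set of (x,y) ∈ ℝ² such that Q_λ(x,y) ≥ 0 for all λ ∈ ℕ₀²; (3) the set of (x,y) ∈ ℝ² such that Q_λ(x,y) > 0 for all λ ∈ ℕ₀². -/
open MvPolynomial

noncomputable section

abbrev Rxy : Type := MvPolynomial (Fin 2) ℤ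

/-- Defining properties of the SU(3) character polynomials `Q a b`
(with the convention `Q a b = 0` whenever `(a, b) ∉ ℕ₀²`). -/
def IsQSU3 (Q : ℤ → ℤ → Rxy) : Prop :=
  (∀ a b : ℤ, (a < 0 ∨ b < 0) → Q a b = 0) ∧
  Q 0 0 = 1 ∧
  Q 1 0 = X 0 ∧
  (∀ a b : ℤ, 0 ≤ a → 0 ≤ b →
    X 0 * Q a b = Q (a + 1) b + Q a (b - 1) + Q (a - 1) (b + 1)) ∧
  (∀ a b : ℤ, rename (Equiv.swap (0 : Fin 2) 1) (Q a b) = Q b a)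

/-!
Write `x = u + v + w` and `y = uv + uw + vw` with `uvw = 1`. Weyl's character formula
`Q_λ(x, y) · A(2, 1) = A(λ₁ + λ₂ + 2, λ₂ + 1)` expresses `Q_λ` as a quotient of alternants
`A(m, n) = det [[u^m, v^m, w^m], [u^n, v^n, w^n], [1, 1, 1]]`; it follows from the recursion
because multiplication by `x` and by `y` acts on alternants by the Pieri rules. For distinct
positive `u, v, w` the generalized Vandermonde determinants `A(m, n)` and `A(2, 1)` have the
same sign, so `Q_λ > 0` at such points, and `Q_λ ≥ 0` on all of `𝒳` by continuity.

Conversely, if all `Q_λ(x, y) ≥ 0`, then `x = Q_(1,0)` and `y = Q_(0,1)` are nonnegative, so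
every real root of `t³ - xt² + yt - 1` is positive. If two roots `z, z̄` were not real, then with
the third root `p > 0` the formula for `λ = (k - 1, k - 1)` would read
`Q_λ · Im z · |z - p|² = Im zᵏ · |zᵏ - pᵏ|²`, whose right side is negative as soon as
`k · arg z ∈ (π, 2π)`.

Finally, `x · Q_λ` is a sum of three values of `Q`, so if they are all nonnegative, a zero of one
`Q_λ` propagates down to `Q_(0,0) = 1`.
-/

open Finset Filter Topology Complex ComplexConjugate

section Alternant

variable {R : Type*} [CommRing R]

/-- The alternant `det [[u^m, v^m, w^m], [u^n, v^n, w^n], [1, 1, 1]]`. -/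
def alternant (m n : ℕ) (u v w : R) : R :=
  u ^ m * v ^ n + v ^ m * w ^ n + w ^ m * u ^ n - (u ^ m * w ^ n + v ^ m * u ^ n + w ^ m * v ^ n)

variable (m n : ℕ) (u v w : R)

@[simp] lemma alternant_self : alternant m m u v w = 0 := by
  simp only [alternant]; ring

@[simp] lemma alternant_zero_right : alternant m 0 u v w = 0 := by
  simp only [alternant]; ring

lemma alternant_swap_left : alternant m n v u w = -alternant m n u v w := by
  simp only [alternant]; ring

lemma alternant_swap_right : alternant m n u w v = -alternant m n u v w := by
  simp only [alternant]; ring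

lemma alternant_swap_outer : alternant m n w v u = -alternant m n u v w := by
  simp only [alternant]; ring

lemma alternant_two_one : alternant 2 1 u v w = (u - v) * (v - w) * (u - w) := by
  simp only [alternant]; ring

lemma alternant_mul_mul (k : ℕ) :
    alternant (k * m) (k * n) u v w = alternant m n (u ^ k) (v ^ k) (w ^ k) := by
  simp only [alternant, pow_mul]

lemma alternant_add_eq_mul_geom_sum₂ (k : ℕ) :
    alternant (n + k) n u v w = (u - w) * (v - w) *
      (u ^ n * (∑ i ∈ range n, v ^ i * w ^ (n - 1 - i))
          * ∑ i ∈ range k, u ^ i * w ^ (k - 1 - i)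
        - v ^ n * (∑ i ∈ range n, u ^ i * w ^ (n - 1 - i))
          * ∑ i ∈ range k, v ^ i * w ^ (k - 1 - i)) := by
  linear_combination (norm := skip) (v ^ n * (u ^ n - w ^ n)) * geom_sum₂_mul v w k
    + (v ^ n * (v - w) * ∑ i ∈ range k, v ^ i * w ^ (k - 1 - i)) * geom_sum₂_mul u w n
    - (u ^ n * (v ^ n - w ^ n)) * geom_sum₂_mul u w k
    - (u ^ n * (u - w) * ∑ i ∈ range k, u ^ i * w ^ (k - 1 - i)) * geom_sum₂_mul v w n
  simp only [alternant]; ring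

variable {u v w}

/- The Pieri rules for `e₁ = u + v + w` and `e₂ = uv + uw + vw`; the exponent vector
`(1, 1, 1)` that they produce is removed using `uvw = 1`. -/

lemma alternant_pieri_e₁ (h : u * v * w = 1) :
    (u + v + w) * alternant (m + 2) (n + 1) u v w
      = alternant (m + 3) (n + 1) u v w + alternant (m + 2) (n + 2) u v w
        + alternant (m + 1) n u v w := by
  linear_combination (norm := skip) (alternant (m + 1) n u v w) * h
  simp only [alternant]; ring

lemma alternant_pieri_e₂ (h : u * v * w = 1) :
    (u * v + u * w + v * w) * alternant (m + 2) (n + 1) u v w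
      = alternant (m + 3) (n + 2) u v w + alternant (m + 2) n u v w
        + alternant (m + 1) (n + 1) u v w := by
  linear_combination (norm := skip)
    (alternant (m + 2) n u v w + alternant (m + 1) (n + 1) u v w) * h
  simp only [alternant]; ring

end Alternant

section Positivity

variable {R : Type*} [CommRing R] [LinearOrder R] [IsStrictOrderedRing R] {a b c : R}

lemma geom_sum₂_le_geom_sum₂ (k : ℕ) (hb : 0 ≤ b) (hba : b ≤ a) (hc : 0 ≤ c) :
    ∑ i ∈ range k, b ^ i * c ^ (k - 1 - i) ≤ ∑ i ∈ range k, a ^ i * c ^ (k - 1 - i) :=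
  sum_le_sum fun i _ => mul_le_mul_of_nonneg_right (pow_le_pow_left₀ hb hba i) (pow_nonneg hc _)

lemma geom_sum₂_pos_of_pos {k : ℕ} (hk : k ≠ 0) (hb : 0 < b) (hc : 0 < c) :
    0 < ∑ i ∈ range k, b ^ i * c ^ (k - 1 - i) :=
  sum_pos (fun i _ => by positivity) (nonempty_range_iff.2 hk)

lemma pow_mul_geom_sum₂_lt {n : ℕ} (hn : n ≠ 0) (hb : 0 < b) (hba : b < a) (hc : 0 < c) :
    b ^ n * ∑ i ∈ range n, a ^ i * c ^ (n - 1 - i)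
      < a ^ n * ∑ i ∈ range n, b ^ i * c ^ (n - 1 - i) := by
  have ha : 0 < a := hb.trans hba
  rw [mul_sum, mul_sum]
  refine sum_lt_sum_of_nonempty (nonempty_range_iff.2 hn) fun i hi => ?_
  have split : ∀ s t : R,
      s ^ n * (t ^ i * c ^ (n - 1 - i)) = s ^ i * t ^ i * c ^ (n - 1 - i) * s ^ (n - i) := by
    intro s t
    rw [← pow_mul_pow_sub s (mem_range.1 hi).le]
    ring
  rw [split, split, mul_comm (b ^ i)]
  exact mul_lt_mul_of_pos_left
    (pow_lt_pow_left₀ hba hb.le (Nat.sub_ne_zero_of_lt (mem_range.1 hi))) (by positivity)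

lemma alternant_pos {m n : ℕ} (hn : n ≠ 0) (hnm : n < m) (hc : 0 < c) (hcb : c < b)
    (hba : b < a) :
    0 < alternant m n a b c := by
  obtain ⟨k, rfl⟩ := Nat.exists_eq_add_of_lt hnm
  have hb : 0 < b := hc.trans hcb
  have ha : 0 < a := hb.trans hba
  rw [add_assoc, alternant_add_eq_mul_geom_sum₂]
  refine mul_pos (mul_pos (sub_pos.2 (hcb.trans hba)) (sub_pos.2 hcb)) (sub_pos.2 ?_)
  exact mul_lt_mul (pow_mul_geom_sum₂_lt hn hb hba hc)
    (geom_sum₂_le_geom_sum₂ _ hb.le hba.le hc.le)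
    (geom_sum₂_pos_of_pos k.succ_ne_zero hb hc)
    (mul_nonneg (pow_nonneg ha.le n) (geom_sum₂_pos_of_pos hn hb hc).le)

lemma alternant_mul_alternant_two_one_pos {m n : ℕ} (hn : n ≠ 0) (hnm : n < m) {u v w : R}
    (hu : 0 < u) (hv : 0 < v) (hw : 0 < w) (huv : u ≠ v) (hvw : v ≠ w) (huw : u ≠ w) :
    0 < alternant m n u v w * alternant 2 1 u v w := by
  wlog hvu : v < u generalizing u v
  · have := this hv hu huv.symm huw hvw (huv.lt_or_gt.resolve_right hvu)
    rwa [alternant_swap_left m n, alternant_swap_left 2 1, neg_mul_neg] at this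
  wlog hwu : w < u generalizing u w
  · have huw' := huw.lt_or_gt.resolve_right hwu
    have := this hu hw hvw.symm huv.symm huw.symm (hvu.trans huw') huw'
    rwa [alternant_swap_outer m n, alternant_swap_outer 2 1, neg_mul_neg] at this
  wlog hwv : w < v generalizing v w
  · have := this hw hv huw hvw.symm huv hwu hvu (hvw.lt_or_gt.resolve_right hwv)
    rwa [alternant_swap_right m n, alternant_swap_right 2 1, neg_mul_neg] at this
  exact mul_pos (alternant_pos hn hnm hw hwv hvu) (alternant_pos one_ne_zero one_lt_two hw hwv hvu)

lemma pos_of_cubic_root {x y t : R} (hx : 0 ≤ x) (hy : 0 ≤ y)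
    (ht : t ^ 3 - x * t ^ 2 + y * t - 1 = 0) : 0 < t := by
  by_contra! h
  nlinarith [mul_nonneg hx (sq_nonneg t), mul_nonpos_of_nonneg_of_nonpos hy h,
    mul_nonpos_of_nonneg_of_nonpos (sq_nonneg t) h]

end Positivity

lemma vieta_of_cubic_root {K : Type*} [Field K] {x y p v w : K} (hp : p ≠ 0)
    (hroot : p ^ 3 - x * p ^ 2 + y * p - 1 = 0) (hsum : v + w = x - p) (hprod : v * w = p⁻¹) :
    p * v * w = 1 ∧ p + v + w = x ∧ p * v + p * w + v * w = y := by
  have hinv : p * p⁻¹ = 1 := mul_inv_cancel₀ hp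
  refine ⟨by rw [mul_assoc, hprod, hinv], by linear_combination hsum, ?_⟩
  linear_combination p * hsum + hprod - p⁻¹ * hroot - (x * p - p ^ 2 - y) * hinv

lemma exists_cubic_root {x y : ℝ} (hx : 0 ≤ x) (hy : 0 ≤ y) :
    ∃ p : ℝ, p ^ 3 - x * p ^ 2 + y * p - 1 = 0 := by
  have hM : (0 : ℝ) ≤ x + y + 1 := by linarith
  obtain ⟨p, -, hp⟩ := intermediate_value_Icc hM
    (f := fun t : ℝ => t ^ 3 - x * t ^ 2 + y * t - 1) (by fun_prop)
    (show (0 : ℝ) ∈ Set.Icc _ _ from ⟨by norm_num, by nlinarith [mul_nonneg hy hM]⟩)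
  exact ⟨p, hp⟩

lemma exists_param_of_pos {u v w : ℝ} (hu : 0 < u) (hv : 0 < v) (h : u * v * w = 1) :
    ∃ a b : ℝ, 0 < a ∧ 0 < b ∧
      u + v + w = a + b⁻¹ + a⁻¹ * b ∧ u * v + u * w + v * w = a⁻¹ + b + a * b⁻¹ := by
  obtain rfl : w = (u * v)⁻¹ := eq_inv_of_mul_eq_one_right h
  exact ⟨u, v⁻¹, hu, inv_pos.2 hv, by field_simp, by field_simp; ring⟩

lemma continuous_aeval_int {σ A : Type*} [CommRing A] [TopologicalSpace A] [IsTopologicalRing A]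
    (p : MvPolynomial σ ℤ) : Continuous fun x : σ → A => aeval x p :=
  (continuous_eval (map (algebraMap ℤ A) p)).congr fun x => by rw [eval_map, aeval_def]

lemma aeval_vec_ofReal (x y : ℝ) (p : Rxy) :
    aeval ![(x : ℂ), (y : ℂ)] p = (aeval ![x, y] p : ℂ) := by
  have : ![(x : ℂ), (y : ℂ)] = algebraMap ℝ ℂ ∘ ![x, y] := by
    ext i; fin_cases i <;> rfl
  rw [this, aeval_algebraMap_apply]
  rfl

lemma alternant_two_one_ofReal_conj (p : ℝ) (z : ℂ) :
    alternant 2 1 (p : ℂ) z (conj z) = ((2 * z.im * normSq (z - p) : ℝ) : ℂ) * I := by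
  rw [alternant_two_one, ofReal_mul, ← mul_conj, map_sub, conj_ofReal]
  linear_combination ((z - p) * (conj z - p)) * sub_conj z

lemma im_pow_eq (z : ℂ) (k : ℕ) : (z ^ k).im = ‖z‖ ^ k * Real.sin (k * arg z) := by
  conv_lhs => rw [← norm_mul_exp_arg_mul_I z]
  rw [mul_pow, ← exp_nat_mul, ← mul_assoc, ← ofReal_pow, ← ofReal_natCast, ← ofReal_mul,
    im_ofReal_mul, exp_ofReal_mul_I_im]

lemma exists_pow_im_neg {z : ℂ} (hz : 0 < z.im) : ∃ k : ℕ, (z ^ k).im < 0 := by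
  have hθ : 0 < arg z :=
    (arg_nonneg_iff.2 hz.le).lt_of_ne fun h => hz.ne' (arg_eq_zero_iff.1 h.symm).2
  have hθπ : arg z < Real.pi := arg_lt_pi_iff.2 (Or.inr hz.ne')
  set k := ⌊Real.pi / arg z⌋₊ + 1
  have hlo : Real.pi < k * arg z := by
    have := Nat.lt_floor_add_one (Real.pi / arg z)
    push_cast [k]
    rwa [div_lt_iff₀ hθ] at this
  have hhi : k * arg z ≤ Real.pi + arg z := by
    have := Nat.floor_le (div_nonneg Real.pi_pos.le hθ.le)
    push_cast [k]
    rw [le_div_iff₀ hθ] at this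
    linarith
  refine ⟨k, ?_⟩
  rw [im_pow_eq, ← neg_neg (Real.sin _), ← Real.sin_sub_pi]
  exact mul_neg_of_pos_of_neg (pow_pos (norm_pos_iff.2 fun h => by simp [h] at hz) k)
    (neg_neg_of_pos (Real.sin_pos_of_pos_of_lt_pi (by linarith) (by linarith)))

namespace IsQSU3

variable {Q : ℤ → ℤ → Rxy} (hQ : IsQSU3 Q)
include hQ

lemma X_one_mul {i j : ℤ} (hi : 0 ≤ i) (hj : 0 ≤ j) :
    X 1 * Q i j = Q i (j + 1) + Q (i - 1) j + Q (i + 1) (j - 1) := by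
  have h := congrArg (rename (Equiv.swap (0 : Fin 2) 1)) (hQ.2.2.2.1 j i hj hi)
  simp only [map_add, map_mul, rename_X, Equiv.swap_apply_left, hQ.2.2.2.2] at h
  rw [h]

lemma Q_zero_one : Q 0 1 = X 1 := by
  rw [← hQ.2.2.2.2, hQ.2.2.1, rename_X, Equiv.swap_apply_left]

section Weyl

variable {R : Type*} [CommRing R] {u v w : R}

/- Indices are shifted by one so that the boundary rows `a = 0` and `b = 0`, where `Q` vanishes,
match the vanishing alternants `A(b, b)` and `A(a, 0)`. -/
theorem aeval_pred_mul_alternant (h : u * v * w = 1) : ∀ a b : ℕ,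
    aeval ![u + v + w, u * v + u * w + v * w] (Q (a - 1) (b - 1)) * alternant 2 1 u v w
      = alternant (a + b) b u v w
  | 0, b => by simp [hQ.1 (-1) _ (Or.inl (by norm_num))]
  | a + 1, 0 => by simp [hQ.1 _ (-1) (Or.inr (by norm_num))]
  | 1, 1 => by simp [hQ.2.1]
  | a + 2, b + 1 => by
    have hx := congrArg (aeval ![u + v + w, u * v + u * w + v * w])
      (hQ.2.2.2.1 a b (Int.natCast_nonneg a) (Int.natCast_nonneg b))
    have ih₁ := aeval_pred_mul_alternant h (a + 1) (b + 1)
    have ih₂ := aeval_pred_mul_alternant h (a + 1) b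
    have ih₃ := aeval_pred_mul_alternant h a (b + 2)
    have pieri := alternant_pieri_e₁ (a + b) b h
    simp only [map_add, map_mul, aeval_X, Matrix.cons_val_zero] at hx
    push_cast at ih₁ ih₂ ih₃ ⊢
    ring_nf at hx ih₁ ih₂ ih₃ pieri ⊢
    linear_combination (-alternant 2 1 u v w) * hx + (u + v + w) * ih₁ - ih₂ - ih₃ + pieri
  | 1, b + 2 => by
    have hy := congrArg (aeval ![u + v + w, u * v + u * w + v * w])
      (hQ.X_one_mul le_rfl (Int.natCast_nonneg b))
    have ih₁ := aeval_pred_mul_alternant h 1 (b + 1)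
    have ih₂ := aeval_pred_mul_alternant h 0 (b + 1)
    have ih₃ := aeval_pred_mul_alternant h 2 b
    have pieri := alternant_pieri_e₂ b b h
    simp only [map_add, map_mul, aeval_X, Matrix.cons_val_one, Matrix.cons_val_zero] at hy
    push_cast at ih₁ ih₂ ih₃ ⊢
    ring_nf at hy ih₁ ih₂ ih₃ pieri ⊢
    linear_combination
      (-alternant 2 1 u v w) * hy + (u * v + u * w + v * w) * ih₁ - ih₂ - ih₃ + pieri
termination_by a b => a + b

theorem aeval_mul_alternant (h : u * v * w = 1) (l₁ l₂ : ℕ) :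
    aeval ![u + v + w, u * v + u * w + v * w] (Q l₁ l₂) * alternant 2 1 u v w
      = alternant (l₁ + l₂ + 2) (l₂ + 1) u v w := by
  have := hQ.aeval_pred_mul_alternant h (l₁ + 1) (l₂ + 1)
  push_cast at this
  simpa only [add_sub_cancel_right, ← add_assoc, Nat.add_right_comm l₁ 1 l₂] using this

end Weyl

theorem aeval_pos_of_distinct {R : Type*} [CommRing R] [LinearOrder R] [IsStrictOrderedRing R]
    {u v w : R} (hu : 0 < u) (hv : 0 < v) (hw : 0 < w)
    (huv : u ≠ v) (hvw : v ≠ w) (huw : u ≠ w) (h : u * v * w = 1) (l₁ l₂ : ℕ) :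
    0 < aeval ![u + v + w, u * v + u * w + v * w] (Q l₁ l₂) := by
  have hpos := alternant_mul_alternant_two_one_pos (m := l₁ + l₂ + 2) (n := l₂ + 1)
    (by omega) (by omega) hu hv hw huv hvw huw
  rw [← hQ.aeval_mul_alternant h, mul_assoc] at hpos
  exact pos_of_mul_pos_left hpos (mul_self_nonneg _)

theorem aeval_param_nonneg {a b : ℝ} (ha : 0 < a) (hb : 0 < b) (l₁ l₂ : ℕ) :
    0 ≤ aeval ![a + b⁻¹ + a⁻¹ * b, a⁻¹ + b + a * b⁻¹] (Q l₁ l₂) := by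
  set f := fun t : ℝ => aeval ![t + b⁻¹ + t⁻¹ * b, t⁻¹ + b + t * b⁻¹] (Q l₁ l₂)
  have hcont : ContinuousAt f a := by
    refine (continuous_aeval_int _).continuousAt.comp ?_
    fun_prop (disch := positivity)
  have avoid : ∀ c : ℝ, ∀ᶠ t in 𝓝[≠] a, t ≠ c := fun c =>
    (eventually_cofinite_ne c).filter_mono (nhdsNE_le_cofinite a)
  refine ge_of_tendsto (hcont.tendsto.mono_left (nhdsWithin_le_nhds (s := {a}ᶜ))) ?_
  -- the triple `(t, b⁻¹, t⁻¹ * b)` behind `f t` is pairwise distinct unless `t ∈ {b⁻¹, √b, b²}`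
  filter_upwards [avoid b⁻¹, avoid √b, avoid (b ^ 2), nhdsWithin_le_nhds (lt_mem_nhds ha)]
    with t h₁ h₂ h₃ (ht : 0 < t)
  have key := hQ.aeval_pos_of_distinct (w := t⁻¹ * b) ht (inv_pos.2 hb) (by positivity) h₁
    ?_ ?_ (by field_simp) l₁ l₂
  · have e : t * b⁻¹ + t * (t⁻¹ * b) + b⁻¹ * (t⁻¹ * b) = t⁻¹ + b + t * b⁻¹ := by
      field_simp; ring
    rw [e] at key
    exact key.le
  · intro h
    field_simp at h
    exact h₃ h
  · intro h
    refine h₂ ((Real.sqrt_eq_iff_mul_self_eq_of_pos ht).2 ?_).symm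
    field_simp at h
    linear_combination h

section Nonneg

variable {R : Type*} [CommRing R] {x y : R}

lemma aeval_nonneg_of_forall_nat [Preorder R]
    (H : ∀ l₁ l₂ : ℕ, 0 ≤ aeval ![x, y] (Q l₁ l₂)) (i j : ℤ) :
    0 ≤ aeval ![x, y] (Q i j) := by
  rcases lt_or_ge i 0 with hi | hi
  · simp [hQ.1 i j (Or.inl hi)]
  rcases lt_or_ge j 0 with hj | hj
  · simp [hQ.1 i j (Or.inr hj)]
  lift i to ℕ using hi
  lift j to ℕ using hj
  exact H i j

variable [LinearOrder R] [IsStrictOrderedRing R]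
  (H : ∀ l₁ l₂ : ℕ, 0 ≤ aeval ![x, y] (Q l₁ l₂))
include H

lemma aeval_eq_zero_of_aeval_eq_zero {i j : ℤ} (hi : 0 ≤ i) (hj : 0 ≤ j)
    (h₀ : aeval ![x, y] (Q i j) = 0) :
    aeval ![x, y] (Q i (j - 1)) = 0 ∧ aeval ![x, y] (Q (i - 1) (j + 1)) = 0 := by
  have hx := congrArg (aeval ![x, y]) (hQ.2.2.2.1 i j hi hj)
  simp only [map_add, map_mul, h₀, mul_zero] at hx
  have := hQ.aeval_nonneg_of_forall_nat H
  constructor <;> linarith [this (i + 1) j, this i (j - 1), this (i - 1) (j + 1)]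

theorem aeval_ne_zero : ∀ l₁ l₂ : ℕ, aeval ![x, y] (Q l₁ l₂) ≠ 0
  | 0, 0 => by simp [hQ.2.1]
  | l₁ + 1, 0 => fun h => aeval_ne_zero l₁ 1 <| by
    simpa using (hQ.aeval_eq_zero_of_aeval_eq_zero H (by omega) le_rfl h).2
  | l₁, l₂ + 1 => fun h => aeval_ne_zero l₁ l₂ <| by
    simpa using (hQ.aeval_eq_zero_of_aeval_eq_zero H (by omega) (by omega) h).1
termination_by l₁ l₂ => 2 * l₁ + l₂

theorem aeval_pos_of_forall_nonneg (l₁ l₂ : ℕ) : 0 < aeval ![x, y] (Q l₁ l₂) :=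
  (H l₁ l₂).lt_of_ne (hQ.aeval_ne_zero H l₁ l₂).symm

end Nonneg

variable {x y : ℝ} (H : ∀ l₁ l₂ : ℕ, 0 ≤ aeval ![x, y] (Q l₁ l₂))
include H

theorem false_of_conj_root {p : ℝ} {z : ℂ} (hz : 0 < z.im) (h : (p : ℂ) * z * conj z = 1)
    (hx : (p : ℂ) + z + conj z = x) (hy : (p : ℂ) * z + p * conj z + z * conj z = y) :
    False := by
  obtain ⟨k, hk⟩ := exists_pow_im_neg hz
  obtain ⟨l, rfl⟩ : ∃ l, k = l + 1 :=
    Nat.exists_eq_succ_of_ne_zero (by rintro rfl; simp at hk)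
  have weyl := hQ.aeval_mul_alternant h l l
  have hpow := alternant_mul_mul 2 1 (p : ℂ) z (conj z) (l + 1)
  rw [show (l + 1) * 2 = l + l + 2 by ring, mul_one, ← map_pow, ← ofReal_pow] at hpow
  rw [hx, hy, aeval_vec_ofReal, hpow, alternant_two_one_ofReal_conj,
    alternant_two_one_ofReal_conj] at weyl
  have hreal : aeval ![x, y] (Q l l) * (2 * z.im * normSq (z - p))
      = 2 * (z ^ (l + 1)).im * normSq (z ^ (l + 1) - ↑(p ^ (l + 1))) := by
    apply ofReal_injective
    apply mul_right_cancel₀ I_ne_zero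
    push_cast at weyl ⊢
    linear_combination weyl
  have hne : z ^ (l + 1) - ↑(p ^ (l + 1)) ≠ 0 := fun h₀ => by
    have := congrArg im h₀
    rw [sub_im, ofReal_im, sub_zero, zero_im] at this
    exact hk.ne this
  have lhs_nonneg :=
    mul_nonneg (H l l) (mul_nonneg (mul_nonneg zero_le_two hz.le) (normSq_nonneg (z - p)))
  have rhs_neg := mul_neg_of_neg_of_pos (mul_neg_of_pos_of_neg two_pos hk) (normSq_pos.2 hne)
  linarith

theorem exists_param_of_forall_nonneg : ∃ a b : ℝ, 0 < a ∧ 0 < b ∧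
    x = a + b⁻¹ + a⁻¹ * b ∧ y = a⁻¹ + b + a * b⁻¹ := by
  have hx : 0 ≤ x := by simpa [hQ.2.2.1] using H 1 0
  have hy : 0 ≤ y := by simpa [hQ.Q_zero_one] using H 0 1
  obtain ⟨p, hroot⟩ := exists_cubic_root hx hy
  have hp := pos_of_cubic_root hx hy hroot
  set D := (x - p) ^ 2 - 4 * p⁻¹
  rcases le_or_gt 0 D with hD | hD
  · obtain ⟨hprod, hsum, hsum₂⟩ := vieta_of_cubic_root (v := (x - p + √D) / 2)
      (w := (x - p - √D) / 2) hp.ne' hroot (by ring)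
      (by linear_combination (-1 / 4 : ℝ) * Real.sq_sqrt hD)
    have root_pos :
        ∀ t, (t - p) * (t - (x - p + √D) / 2) * (t - (x - p - √D) / 2) = 0 → 0 < t :=
      fun t ht => pos_of_cubic_root hx hy (by rw [← ht, ← hsum, ← hsum₂, ← hprod]; ring)
    obtain ⟨a, b, ha, hb, h₁, h₂⟩ := exists_param_of_pos hp (root_pos _ (by ring)) hprod
    exact ⟨a, b, ha, hb, hsum ▸ h₁, hsum₂ ▸ h₂⟩
  · obtain ⟨z, hre, him⟩ : ∃ z : ℂ, z.re = (x - p) / 2 ∧ z.im = √(-D) / 2 :=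
      ⟨⟨_, _⟩, rfl, rfl⟩
    have hz : 0 < z.im := by rw [him]; linarith [Real.sqrt_pos.2 (neg_pos.2 hD)]
    have hnorm : normSq z = p⁻¹ := by
      rw [normSq_apply, hre, him]
      linear_combination (1 / 4 : ℝ) * Real.sq_sqrt (neg_pos.2 hD).le
    obtain ⟨hprod, hsum, hsum₂⟩ :=
      vieta_of_cubic_root (x := (x : ℂ)) (y := y) (p := p) (v := z) (w := conj z)
        (by exact_mod_cast hp.ne') (by exact_mod_cast hroot)
        (by rw [add_conj, hre]; push_cast; ring) (by rw [mul_conj, hnorm, ofReal_inv])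
    exact (hQ.false_of_conj_root H hz hprod hsum hsum₂).elim

end IsQSU3

theorem stmt_12 (Q : ℤ → ℤ → Rxy) (hQ : IsQSU3 Q) :
    ({q : ℝ × ℝ | ∃ a b : ℝ, 0 < a ∧ 0 < b ∧
        q = (a + b⁻¹ + a⁻¹ * b, a⁻¹ + b + a * b⁻¹)} =
      {q : ℝ × ℝ | ∀ l1 l2 : ℕ, 0 ≤ aeval ![q.1, q.2] (Q (l1 : ℤ) (l2 : ℤ))}) ∧
    ({q : ℝ × ℝ | ∀ l1 l2 : ℕ, 0 ≤ aeval ![q.1, q.2] (Q (l1 : ℤ) (l2 : ℤ))} =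
      {q : ℝ × ℝ | ∀ l1 l2 : ℕ, 0 < aeval ![q.1, q.2] (Q (l1 : ℤ) (l2 : ℤ))}) := by
  refine ⟨Set.ext fun q => ⟨?_, fun H => ?_⟩,
    Set.ext fun q => ⟨hQ.aeval_pos_of_forall_nonneg, fun H l₁ l₂ => (H l₁ l₂).le⟩⟩
  · rintro ⟨a, b, ha, hb, rfl⟩
    exact hQ.aeval_param_nonneg ha hb
  · obtain ⟨a, b, ha, hb, h₁, h₂⟩ := hQ.exists_param_of_forall_nonneg H
    exact ⟨a, b, ha, hb, Prod.ext h₁ h₂⟩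
end
end

section
/- For every k ∈ ℕ, the coset of 1 + x in the quotient ring ℤ[x]/⟨S_{k+1}(x)⟩ is a unit if and only if k is not congruent to 1 modulo 3. -/
/-! Since `1 + X = X - (-1)`, the class of `1 + X` is a unit modulo `p` exactly when `p(-1)` is a
unit of `ℤ`, and the recurrence makes `S_n(-1)` run periodically through `1, -1, 0`. -/

/-- Defining properties of the SU(2) character polynomials `S_j(x)`:
`S_0 = 1`, `S_1 = x` and `S_{j+1} = x·S_j − S_{j−1}` for `j ≥ 1`. -/
def IsSSU2 (S : ℕ → Polynomial ℤ) : Prop :=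
  S 0 = 1 ∧ S 1 = Polynomial.X ∧
  ∀ j : ℕ, 1 ≤ j → S (j + 1) = Polynomial.X * S j - S (j - 1)

open Polynomial

-- Evaluation at `a` gives one direction, the factorisation `p - p(a) = (X - a) q` the other.
theorem Polynomial.isUnit_mk_X_sub_C_iff {R : Type*} [CommRing R] (p : R[X]) (a : R) :
    IsUnit (Ideal.Quotient.mk (Ideal.span {p}) (X - C a)) ↔ IsUnit (p.eval a) := by
  constructor
  · intro hu
    obtain ⟨b, hb⟩ := hu.exists_right_inv
    obtain ⟨b, rfl⟩ := Ideal.Quotient.mk_surjective b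
    rw [← map_mul, ← map_one (Ideal.Quotient.mk _), Ideal.Quotient.eq,
      Ideal.mem_span_singleton'] at hb
    obtain ⟨c, hc⟩ := hb
    have hc_eval := congrArg (eval a) hc
    simp only [eval_mul, eval_sub, eval_X, eval_C, sub_self, zero_mul, eval_one] at hc_eval
    exact .of_mul_eq_one (-c.eval a) (by linear_combination -hc_eval)
  · intro hu
    obtain ⟨v, hv⟩ := hu.exists_right_inv
    obtain ⟨q, hq⟩ : X - C a ∣ p - C (p.eval a) := X_sub_C_dvd_sub_C_eval
    refine .of_mul_eq_one (Ideal.Quotient.mk _ (-C v * q)) ?_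
    rw [← map_mul, ← map_one (Ideal.Quotient.mk _), Ideal.Quotient.eq,
      Ideal.mem_span_singleton']
    have hCv : C (p.eval a) * C v = 1 := by rw [← C_mul, hv, C_1]
    exact ⟨-C v, by linear_combination -C v * hq - hCv⟩

namespace IsSSU2

variable {S : ℕ → ℤ[X]}

theorem eval_neg_one (hS : IsSSU2 S) (n : ℕ) :
    (S n).eval (-1) = if n % 3 = 0 then 1 else if n % 3 = 1 then -1 else 0 := by
  induction n using Nat.twoStepInduction with
  | zero => simp [hS.1]
  | one => simp [hS.2.1]
  | more n ih₀ ih₁ =>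
    rw [hS.2.2 (n + 1) (by omega), Nat.add_sub_cancel, eval_sub, eval_mul, eval_X, ih₀, ih₁]
    have h₁ : (n + 1) % 3 = (n % 3 + 1) % 3 := by omega
    have h₂ : (n + 2) % 3 = (n % 3 + 2) % 3 := by omega
    rw [h₁, h₂]
    rcases (by omega : n % 3 = 0 ∨ n % 3 = 1 ∨ n % 3 = 2) with h | h | h <;> simp [h]

theorem isUnit_eval_neg_one_iff (hS : IsSSU2 S) (n : ℕ) :
    IsUnit ((S n).eval (-1)) ↔ n % 3 ≠ 2 := by
  rw [hS.eval_neg_one]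
  rcases (by omega : n % 3 = 0 ∨ n % 3 = 1 ∨ n % 3 = 2) with h | h | h <;> simp [h]

end IsSSU2

theorem stmt_14_general (S : ℕ → Polynomial ℤ) (hS : IsSSU2 S) (k : ℕ) :
    IsUnit (Ideal.Quotient.mk (Ideal.span ({S (k + 1)} : Set (Polynomial ℤ)))
        (1 + Polynomial.X)) ↔ ¬ (k % 3 = 1) := by
  rw [show (1 + X : ℤ[X]) = X - C (-1) by simp [add_comm], isUnit_mk_X_sub_C_iff,
    hS.isUnit_eval_neg_one_iff]
  omega

theorem stmt_14 (S : ℕ → Polynomial ℤ) (hS : IsSSU2 S) (k : ℕ) (hk : 1 ≤ k) :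
    IsUnit (Ideal.Quotient.mk (Ideal.span ({S (k + 1)} : Set (Polynomial ℤ)))
        (1 + Polynomial.X)) ↔ ¬ (k % 3 = 1) :=
  stmt_14_general S hS k
end

section
/- For every n ∈ ℕ₀, the polynomial S_{2n+1}(x) divides Σ_{j=0}^{2n} (−1)^j·S_j(x)² − Σ_{j=0}^{n} (−1)^j·S_{2j}(x) in ℤ[x]. -/
/-- Auxiliary quotient polynomials: `Q 0 = 0`, `Q (n+1) = S (2n+1) - Q n`. -/
noncomputable def QSU2 (S : ℕ → Polynomial ℤ) : ℕ → Polynomial ℤ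
  | 0 => 0
  | n + 1 => S (2 * n + 1) - QSU2 S n

lemma SSU2_mul (S : ℕ → Polynomial ℤ) (hS : IsSSU2 S) :
    ∀ b a : ℕ, S (a + 1) * S (b + 1) = S (a + b + 2) + S a * S b := by
  intro b
  induction b with
  | zero =>
    intro a
    have h1 := hS.2.2 (a + 1) (by omega)
    simp only [Nat.add_sub_cancel] at h1
    rw [hS.2.1, hS.1]
    linear_combination -h1
  | succ b ih =>
    intro a
    have h1 := hS.2.2 (b + 1) (by omega)
    simp only [Nat.add_sub_cancel] at h1
    have h2 := hS.2.2 (a + 1) (by omega)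
    simp only [Nat.add_sub_cancel] at h2
    have h3 := ih (a + 1)
    have e1 : a + 1 + b + 2 = a + (b + 1) + 2 := by omega
    rw [e1] at h3
    linear_combination S (a + 1) * h1 - S (b + 1) * h2 + h3

lemma SSU2_xQ (S : ℕ → Polynomial ℤ) (hS : IsSSU2 S) :
    ∀ n : ℕ, Polynomial.X * QSU2 S n = S (2 * n) - (-1 : Polynomial ℤ) ^ n := by
  intro n
  induction n with
  | zero => simp [QSU2, hS.1]
  | succ n ih =>
    have h1 := hS.2.2 (2 * n + 1) (by omega)
    simp only [Nat.add_sub_cancel] at h1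
    have e1 : 2 * (n + 1) = 2 * n + 1 + 1 := by omega
    rw [e1]
    simp only [QSU2]
    linear_combination -ih - h1

lemma SSU2_key (S : ℕ → Polynomial ℤ) (hS : IsSSU2 S) :
    ∀ n : ℕ,
      (∑ j ∈ Finset.range (2 * n + 1), (-1 : Polynomial ℤ) ^ j * (S j) ^ 2) -
        (∑ j ∈ Finset.range (n + 1), (-1 : Polynomial ℤ) ^ j * S (2 * j)) =
      S (2 * n + 1) * QSU2 S n := by
  intro n
  induction n with
  | zero => simp [QSU2, hS.1]
  | succ n ih =>
    have e1 : 2 * (n + 1) + 1 = 2 * n + 1 + 1 + 1 := by omega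
    rw [e1, Finset.sum_range_succ (n := 2 * n + 1 + 1), Finset.sum_range_succ (n := 2 * n + 1),
      Finset.sum_range_succ (n := n + 1)]
    have hp1 : ((-1 : Polynomial ℤ)) ^ (2 * n + 1) = -1 := by
      rw [pow_succ, pow_mul]; norm_num
    have hp2 : ((-1 : Polynomial ℤ)) ^ (2 * n + 1 + 1) = 1 := by
      rw [pow_succ, hp1]; ring
    rw [hp1, hp2]
    have e2 : 2 * n + 1 + 1 = 2 * n + 2 := by omega
    rw [e2]
    have e3 : 2 * (n + 1) = 2 * n + 2 := by omega
    rw [e3]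
    -- identities
    have h1 := SSU2_mul S hS (2 * n) (2 * n + 2)
    have e4 : 2 * n + 2 + 2 * n + 2 = 4 * n + 4 := by omega
    have e5 : 2 * n + 2 + 1 = 2 * n + 3 := by omega
    rw [e4, e5] at h1
    have h2 := SSU2_mul S hS (2 * n + 1) (2 * n + 1)
    have e6 : 2 * n + 1 + (2 * n + 1) + 2 = 4 * n + 4 := by omega
    have e7 : 2 * n + 1 + 1 = 2 * n + 2 := by omega
    rw [e6, e7] at h2
    have h3 := hS.2.2 (2 * n + 2) (by omega)
    rw [show 2 * n + 2 - 1 = 2 * n + 1 from by omega, e5] at h3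
    have h4 := SSU2_xQ S hS n
    simp only [QSU2]
    rw [e5]
    linear_combination ih - h1 + h2 + (QSU2 S n) * h3 + S (2 * n + 2) * h4

theorem stmt_15 (S : ℕ → Polynomial ℤ) (hS : IsSSU2 S) (n : ℕ) :
    S (2 * n + 1) ∣
      (∑ j ∈ Finset.range (2 * n + 1), (-1 : Polynomial ℤ) ^ j * (S j) ^ 2) -
        ∑ j ∈ Finset.range (n + 1), (-1 : Polynomial ℤ) ^ j * S (2 * j) := by
  exact ⟨QSU2 S n, SSU2_key S hS n⟩
end

section
/- For every n ∈ ℕ₀, the polynomial S_{2n+1}(x) divides (1 + 2·Σ_{j=1}^{2n} S_j(x))·(1 + 2·Σ_{j=1}^{2n} (−1)^j·S_j(x)) − 1 in ℤ[x]. -/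
namespace SSU2aux

open Polynomial

variable {S : ℕ → Polynomial ℤ}

lemma rec2 (hS : IsSSU2 S) (m : ℕ) : S (m + 2) = X * S (m + 1) - S m := by
  have := hS.2.2 (m + 1) (by omega)
  simpa using this

/-- Catalan-type identity `S_{m+1}² − S_m S_{m+2} = 1`. -/
lemma cat (hS : IsSSU2 S) (m : ℕ) : S (m + 1) * S (m + 1) - S m * S (m + 2) = 1 := by
  induction m with
  | zero =>
      rw [rec2 hS 0, hS.1, hS.2.1]
      ring
  | succ k ih =>
      rw [rec2 hS (k + 1)]
      rw [rec2 hS k] at ih ⊢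
      linear_combination ih

lemma lemA (hS : IsSSU2 S) (m : ℕ) :
    (X - 2) * (1 + 2 * ∑ j ∈ Finset.Icc 1 m, S j) = 2 * S (m + 1) - 2 * S m - X := by
  induction m with
  | zero =>
      simp [hS.1, hS.2.1]
      ring
  | succ k ih =>
      rw [Finset.sum_Icc_succ_top (by omega : 1 ≤ k + 1), rec2 hS k]
      linear_combination ih

lemma lemB (hS : IsSSU2 S) (m : ℕ) :
    (X + 2) * (1 + 2 * ∑ j ∈ Finset.Icc 1 m, (-1 : Polynomial ℤ) ^ j * S j) =
      2 * (-1 : Polynomial ℤ) ^ m * (S (m + 1) + S m) - X := by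
  induction m with
  | zero =>
      simp [hS.1, hS.2.1]
      ring
  | succ k ih =>
      rw [Finset.sum_Icc_succ_top (by omega : 1 ≤ k + 1),
        show k + 1 + 1 = k + 2 from rfl, rec2 hS k, pow_succ]
      linear_combination ih

lemma lemD (hS : IsSSU2 S) (n : ℕ) :
    (X ^ 2 - 4) * ∑ k ∈ Finset.range n, S (2 * k + 1) =
      2 * S (2 * n + 1) - X * S (2 * n) - X := by
  induction n with
  | zero =>
      simp [hS.1, hS.2.1]
      ring
  | succ k ih =>
      rw [Finset.sum_range_succ]
      have h1 := rec2 hS (2 * k)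
      have h2 := rec2 hS (2 * k + 1)
      rw [show 2 * k + 1 + 1 = 2 * k + 2 from rfl] at h2
      rw [show 2 * (k + 1) + 1 = 2 * k + 1 + 2 from by ring,
        show 2 * (k + 1) = 2 * k + 2 from by ring]
      linear_combination ih - 2 * h2 - X * h1

end SSU2aux

theorem stmt_16 (S : ℕ → Polynomial ℤ) (hS : IsSSU2 S) (n : ℕ) :
    S (2 * n + 1) ∣
      (1 + 2 * ∑ j ∈ Finset.Icc 1 (2 * n), S j) *
          (1 + 2 * ∑ j ∈ Finset.Icc 1 (2 * n), (-1 : Polynomial ℤ) ^ j * S j) - 1 := by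
  open Polynomial in
  refine ⟨4 * ∑ k ∈ Finset.range n, S (2 * k + 1), ?_⟩
  have hA := SSU2aux.lemA hS (2 * n)
  have hB := SSU2aux.lemB hS (2 * n)
  have hD := SSU2aux.lemD hS n
  have hcat := SSU2aux.cat hS (2 * n)
  have hrec := SSU2aux.rec2 hS (2 * n)
  have hpow : ((-1 : Polynomial ℤ)) ^ (2 * n) = 1 := by
    rw [pow_mul]; norm_num
  rw [hpow] at hB
  have hne : (X ^ 2 - 4 : Polynomial ℤ) ≠ 0 := by
    intro h
    have := congrArg (Polynomial.eval 0) h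
    simp at this
  apply mul_left_cancel₀ hne
  set A := (1 + 2 * ∑ j ∈ Finset.Icc 1 (2 * n), S j) with hAdef
  set B := (1 + 2 * ∑ j ∈ Finset.Icc 1 (2 * n), (-1 : Polynomial ℤ) ^ j * S j) with hBdef
  linear_combination ((X + 2) * B) * hA + (2 * S (2 * n + 1) - 2 * S (2 * n) - X) * hB
    - 4 * S (2 * n + 1) * hD - 4 * hcat - 4 * S (2 * n) * hrec
end

section
/- For every integer n ≥ 2, the ordered abelian group G = ℤⁿ with positive cone G₊ = {v ∈ ℤⁿ : v ≠ 0 and v_1 + v_2 + ⋯ + v_n > 0} ∪ {0} does not have the Riesz interpolation property. In fact, for h_1 = 0, h_2 = e_1 − e_2, g_1 = e_1 and g_2 = 2e_1 − e_2 (where e_i are the standard basis vectors), one has h_i ≤ g_j for all i,j ∈ {1,2}, but there is no x ∈ G with h_i ≤ x ≤ g_j for all i,j ∈ {1,2}. -/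
/-- The positive cone of `Ver_1(SU(n))`: `v ∈ G₊` iff `v = 0` or (`v ≠ 0` and `∑ᵢ vᵢ > 0`). -/
def VerPos (n : ℕ) (v : Fin n → ℤ) : Prop :=
  v = 0 ∨ (v ≠ 0 ∧ 0 < ∑ i, v i)

/-- The associated order: `v ≤ w` iff `w - v ∈ G₊`. -/
def VerLe (n : ℕ) (v w : Fin n → ℤ) : Prop := VerPos n (w - v)

theorem stmt_17 (n : ℕ) (hn : 2 ≤ n) :
    (¬ ∀ h1 h2 g1 g2 : Fin n → ℤ,
        (VerLe n h1 g1 ∧ VerLe n h1 g2 ∧ VerLe n h2 g1 ∧ VerLe n h2 g2) →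
        ∃ x : Fin n → ℤ,
          VerLe n h1 x ∧ VerLe n h2 x ∧ VerLe n x g1 ∧ VerLe n x g2) ∧
    (VerLe n 0 (Pi.single (⟨0, by omega⟩ : Fin n) (1 : ℤ)) ∧
      VerLe n 0
        (2 • Pi.single (⟨0, by omega⟩ : Fin n) (1 : ℤ) - Pi.single (⟨1, by omega⟩ : Fin n) 1) ∧
      VerLe n (Pi.single (⟨0, by omega⟩ : Fin n) (1 : ℤ) - Pi.single (⟨1, by omega⟩ : Fin n) 1)
        (Pi.single (⟨0, by omega⟩ : Fin n) (1 : ℤ)) ∧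
      VerLe n (Pi.single (⟨0, by omega⟩ : Fin n) (1 : ℤ) - Pi.single (⟨1, by omega⟩ : Fin n) 1)
        (2 • Pi.single (⟨0, by omega⟩ : Fin n) (1 : ℤ) - Pi.single (⟨1, by omega⟩ : Fin n) 1)) ∧
    ¬ ∃ x : Fin n → ℤ,
        VerLe n 0 x ∧
        VerLe n (Pi.single (⟨0, by omega⟩ : Fin n) (1 : ℤ) - Pi.single (⟨1, by omega⟩ : Fin n) 1)
          x ∧
        VerLe n x (Pi.single (⟨0, by omega⟩ : Fin n) (1 : ℤ)) ∧
        VerLe n x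
          (2 • Pi.single (⟨0, by omega⟩ : Fin n) (1 : ℤ) -
            Pi.single (⟨1, by omega⟩ : Fin n) 1) := by
  have hne : (⟨0, by omega⟩ : Fin n) ≠ (⟨1, by omega⟩ : Fin n) := by
    simp [Fin.ext_iff]
  set i0 : Fin n := ⟨0, by omega⟩
  set i1 : Fin n := ⟨1, by omega⟩
  set e0 : Fin n → ℤ := Pi.single i0 1 with he0
  set e1 : Fin n → ℤ := Pi.single i1 1 with he1
  have ssub : ∀ v w : Fin n → ℤ, ∑ i, (v - w) i = (∑ i, v i) - ∑ i, w i := by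
    intro v w; simp [Finset.sum_sub_distrib]
  have s0 : ∑ i, e0 i = 1 := by simp [he0, Finset.sum_pi_single']
  have s1 : ∑ i, e1 i = 1 := by simp [he1, Finset.sum_pi_single']
  have s2 : ∑ i, (2 • e0) i = 2 := by
    simp only [Pi.smul_apply]; rw [← Finset.smul_sum, s0]; simp
  have he0ne : e0 ≠ 0 := by
    intro h
    have := congrFun h i0
    simp [he0, Pi.single_eq_same] at this
  have key : ¬ ∃ x : Fin n → ℤ,
      VerLe n 0 x ∧ VerLe n (e0 - e1) x ∧ VerLe n x e0 ∧ VerLe n x (2 • e0 - e1) := by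
    rintro ⟨x, hx0, hx2, hg1, hg2⟩
    unfold VerLe VerPos at hx0 hx2 hg1 hg2
    rw [sub_zero] at hx0
    rcases hx0 with rfl | ⟨hxne, hS⟩
    · rcases hx2 with h | ⟨_, h⟩
      · have := congrFun h i1
        simp [he0, he1, Pi.single_eq_same, Pi.single_eq_of_ne hne, Pi.single_eq_of_ne hne.symm] at this
      · rw [ssub, ssub, s0, s1] at h
        simp at h
    · rcases hg1 with h | ⟨_, h⟩
      · rw [sub_eq_zero] at h
        subst h
        rcases hg2 with h' | ⟨_, h'⟩
        · have := congrFun h' i1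
          simp [he0, he1, Pi.single_eq_same, Pi.single_eq_of_ne hne, Pi.single_eq_of_ne hne.symm] at this
        · rw [ssub, ssub, s2, s1, s0] at h'
          omega
      · rw [ssub, s0] at h
        omega
  have p1 : VerLe n 0 e0 := by
    refine Or.inr ⟨?_, ?_⟩
    · rw [sub_zero]; exact he0ne
    · rw [sub_zero, s0]; norm_num
  have p2 : VerLe n 0 (2 • e0 - e1) := by
    refine Or.inr ⟨?_, ?_⟩
    · rw [sub_zero]
      intro h
      have := congrFun h i0
      simp [he0, he1, Pi.single_eq_same, Pi.single_eq_of_ne hne] at this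
    · rw [sub_zero, ssub, s2, s1]; norm_num
  have p3 : VerLe n (e0 - e1) e0 := by
    have hr : e0 - (e0 - e1) = e1 := by ring
    unfold VerLe
    rw [hr]
    refine Or.inr ⟨?_, ?_⟩
    · intro h
      have := congrFun h i1
      simp [he1, Pi.single_eq_same] at this
    · rw [s1]; norm_num
  have p4 : VerLe n (e0 - e1) (2 • e0 - e1) := by
    have hr : 2 • e0 - e1 - (e0 - e1) = e0 := by ring
    unfold VerLe
    rw [hr]
    refine Or.inr ⟨he0ne, ?_⟩
    rw [s0]; norm_num
  exact ⟨fun H => key (H 0 (e0 - e1) e0 (2 • e0 - e1) ⟨p1, p2, p3, p4⟩),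
    ⟨p1, p2, p3, p4⟩, key⟩
end
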